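/- arXiv:2305.08535 — 11 statements merged into one kernel-verified Lean document; each statement's English description precedes it below -/
import Mathlib

section
/- Let τ̄ ∈ ℕ and let p, q ∈ (0,1) satisfy p + q < 1. Let (V(k))_{k∈ℕ} be a nonnegative real sequence such that V(k+1) ≤ p·V(k) + q·max{V(ℓ) : max(k−τ̄,0) ≤ ℓ ≤ k} for every k ∈ ℕ. Then V(k) ≤ ρ^k · V(0) for every k ∈ ℕ, where ρ = (p+q)^{1/(1+(1−p)·τ̄)}. -/
/-! The geometric sequence `ρ ^ k * V 0` is a supersolution of the delayed recursion as soon as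
`p * ρ ^ τ + q ≤ ρ ^ (τ + 1)`, and strong induction then bounds `V` by it. For
`ρ = (p + q) ^ (1 / β)` with `β = 1 + (1 - p) * τ` this inequality reads
`ρ ^ β + p * ρ ^ τ ≤ ρ ^ (τ + 1) + p`, which follows from the weighted AM-GM bound
`ρ ^ ((1 - p) * τ) ≤ (1 - p) * ρ ^ τ + p` and `(1 - ρ) * (1 - ρ ^ τ) ≥ 0`. -/

open Real

lemma rpow_one_add_one_sub_mul_add_le {x p : ℝ} (hx0 : 0 ≤ x) (hx1 : x ≤ 1) (hp0 : 0 ≤ p)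
    (hp1 : p ≤ 1) (n : ℕ) :
    x ^ (1 + (1 - p) * n) + p * x ^ n ≤ x ^ (n + 1) + p := by
  have amgm : x ^ ((1 - p) * n) ≤ (1 - p) * x ^ n + p := by
    have := geom_mean_le_arith_mean2_weighted (sub_nonneg.2 hp1) hp0 (pow_nonneg hx0 n)
      zero_le_one (by ring)
    rwa [one_rpow, mul_one, mul_one, ← rpow_natCast, ← rpow_mul hx0, mul_comm,
      rpow_natCast] at this
  have hexp : 1 + (1 - p) * n ≠ 0 := by
    have := mul_nonneg (sub_nonneg.2 hp1) (Nat.cast_nonneg (α := ℝ) n)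
    linarith
  have hxn : x ^ n ≤ 1 := pow_le_one₀ hx0 hx1
  rw [rpow_add' hx0 hexp, rpow_one, pow_succ]
  nlinarith [mul_le_mul_of_nonneg_left amgm hx0,
    mul_nonneg hp0 (mul_nonneg (sub_nonneg.2 hx1) (sub_nonneg.2 hxn))]

lemma mul_pow_add_mul_pow_tsub_le_pow_succ {ρ p q : ℝ} {τ : ℕ} (hρ0 : 0 < ρ) (hρ1 : ρ ≤ 1)
    (hq : 0 ≤ q) (h : p * ρ ^ τ + q ≤ ρ ^ (τ + 1)) (k : ℕ) :
    p * ρ ^ k + q * ρ ^ (k - τ) ≤ ρ ^ (k + 1) := by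
  rcases le_total τ k with hτk | hkτ
  · obtain ⟨m, rfl⟩ := Nat.exists_eq_add_of_le hτk
    rw [Nat.add_sub_cancel_left]
    calc p * ρ ^ (τ + m) + q * ρ ^ m = ρ ^ m * (p * ρ ^ τ + q) := by ring
      _ ≤ ρ ^ m * ρ ^ (τ + 1) := mul_le_mul_of_nonneg_left h (pow_nonneg hρ0.le m)
      _ = ρ ^ (τ + m + 1) := by ring
  · obtain ⟨e, rfl⟩ := Nat.exists_eq_add_of_le hkτ
    rw [Nat.sub_eq_zero_of_le hkτ, pow_zero, mul_one]
    -- multiply by `ρ ^ e`, which shrinks `q` and turns the goal into `h`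
    refine le_of_mul_le_mul_left ?_ (pow_pos hρ0 e)
    calc ρ ^ e * (p * ρ ^ k + q) = p * ρ ^ (k + e) + ρ ^ e * q := by ring
      _ ≤ p * ρ ^ (k + e) + q := by
          gcongr
          exact mul_le_of_le_one_left hq (pow_le_one₀ hρ0.le hρ1)
      _ ≤ ρ ^ (k + e + 1) := h
      _ = ρ ^ e * ρ ^ (k + 1) := by ring

lemma le_pow_mul_of_delayed_recursion {V : ℕ → ℝ} {p q ρ : ℝ} {τ : ℕ} (hV0 : 0 ≤ V 0)
    (hp : 0 ≤ p) (hq : 0 ≤ q) (hρ0 : 0 ≤ ρ) (hρ1 : ρ ≤ 1)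
    (hstep : ∀ k, p * ρ ^ k + q * ρ ^ (k - τ) ≤ ρ ^ (k + 1))
    (hrec : ∀ k, V (k + 1) ≤
      p * V k + q * (Finset.Icc (k - τ) k).sup' ⟨k, Finset.mem_Icc.mpr ⟨Nat.sub_le _ _, le_rfl⟩⟩ V) :
    ∀ k, V k ≤ ρ ^ k * V 0 := by
  intro k
  induction k using Nat.strong_induction_on with
  | _ k ih =>
    cases k with
    | zero => simp
    | succ k =>
      have hwindow : (Finset.Icc (k - τ) k).sup'
          ⟨k, Finset.mem_Icc.mpr ⟨Nat.sub_le _ _, le_rfl⟩⟩ V ≤ ρ ^ (k - τ) * V 0 := by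
        refine Finset.sup'_le _ _ fun ℓ hℓ => ?_
        obtain ⟨hlo, hhi⟩ := Finset.mem_Icc.mp hℓ
        calc V ℓ ≤ ρ ^ ℓ * V 0 := ih ℓ (by omega)
          _ ≤ ρ ^ (k - τ) * V 0 :=
            mul_le_mul_of_nonneg_right (pow_le_pow_of_le_one hρ0 hρ1 hlo) hV0
      calc V (k + 1) ≤ p * V k + q * (Finset.Icc (k - τ) k).sup'
            ⟨k, Finset.mem_Icc.mpr ⟨Nat.sub_le _ _, le_rfl⟩⟩ V := hrec k
        _ ≤ p * (ρ ^ k * V 0) + q * (ρ ^ (k - τ) * V 0) := by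
            gcongr
            exact ih k (by omega)
        _ = (p * ρ ^ k + q * ρ ^ (k - τ)) * V 0 := by ring
        _ ≤ ρ ^ (k + 1) * V 0 := mul_le_mul_of_nonneg_right (hstep k) hV0

/-- Lemma 5 (Lemma `sequencelemma`) of the paper: a nonnegative sequence satisfying
the delayed recursion `V(k+1) ≤ p·V(k) + q·max_{max(k−τ̄,0) ≤ ℓ ≤ k} V(ℓ)` converges
linearly with factor `ρ = (p+q)^(1/(1+(1−p)·τ̄))`. -/
theorem stmt_0 (τ : ℕ) (p q : ℝ) (hp : p ∈ Set.Ioo (0:ℝ) 1) (hq : q ∈ Set.Ioo (0:ℝ) 1)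
    (hpq : p + q < 1) (V : ℕ → ℝ) (hV : ∀ k, 0 ≤ V k)
    (hrec : ∀ k, V (k + 1) ≤
      p * V k + q * (Finset.Icc (k - τ) k).sup' ⟨k, Finset.mem_Icc.mpr ⟨Nat.sub_le _ _, le_rfl⟩⟩ V) :
    ∀ k, V k ≤ ((p + q) ^ ((1 : ℝ) / (1 + (1 - p) * (τ : ℝ)))) ^ k * V 0 := by
  obtain ⟨hp0, hp1⟩ := hp
  obtain ⟨hq0, -⟩ := hq
  set β : ℝ := 1 + (1 - p) * τ
  set ρ : ℝ := (p + q) ^ ((1 : ℝ) / β)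
  have hβ : 0 < β := by
    have := mul_nonneg (sub_nonneg.2 hp1.le) (Nat.cast_nonneg (α := ℝ) τ)
    linarith
  have hs0 : 0 ≤ p + q := by linarith
  have hρ0 : 0 < ρ := rpow_pos_of_pos (by linarith) _
  have hρ1 : ρ ≤ 1 := rpow_le_one hs0 hpq.le (by positivity)
  have hρβ : ρ ^ β = p + q := by
    rw [← rpow_mul hs0, one_div, inv_mul_cancel₀ hβ.ne', rpow_one]
  have key : p * ρ ^ τ + q ≤ ρ ^ (τ + 1) := by
    have := rpow_one_add_one_sub_mul_add_le hρ0.le hρ1 hp0.le hp1.le τ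
    rw [hρβ] at this
    linarith
  exact le_pow_mul_of_delayed_recursion (hV 0) hp0.le hq0.le hρ0.le hρ1
    (mul_pow_add_mul_pow_tsub_le_pow_succ hρ0 hρ1 hq0.le key) hrec
end

section
/- Let τ̄ ∈ ℕ and let p, q ∈ (0,1) satisfy p + q < 1. Set ρ = (p+q)^{1/(1+(1−p)·τ̄)}. Then p + q·ρ^{−τ̄} ≤ ρ. -/
open Real

/-- The key inequality `p + q·ρ^{−τ̄} ≤ ρ` for `ρ = (p+q)^(1/(1+(1−p)·τ̄))`. -/
theorem stmt_1 (τ : ℕ) (p q : ℝ) (hp : p ∈ Set.Ioo (0:ℝ) 1) (hq : q ∈ Set.Ioo (0:ℝ) 1)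
    (hpq : p + q < 1) :
    p + q * ((p + q) ^ ((1 : ℝ) / (1 + (1 - p) * (τ : ℝ)))) ^ (-(τ : ℝ)) ≤
      (p + q) ^ ((1 : ℝ) / (1 + (1 - p) * (τ : ℝ))) := by
  obtain ⟨hp0, hp1⟩ := hp
  obtain ⟨hq0, hq1⟩ := hq
  have hs0 : (0:ℝ) < p + q := by linarith
  have hT : (0:ℝ) < 1 + (1 - p) * (τ : ℝ) := by
    have : (0:ℝ) ≤ (1 - p) * τ := mul_nonneg (by linarith) (Nat.cast_nonneg τ)
    linarith
  set T : ℝ := 1 + (1 - p) * (τ : ℝ) with hTdef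
  set r : ℝ := (p + q) ^ ((1:ℝ)/T) with hrdef
  have hr0 : 0 < r := rpow_pos_of_pos hs0 _
  have hr1 : r < 1 := rpow_lt_one hs0.le hpq (by positivity)
  have hrT : r ^ T = p + q := by
    rw [hrdef, ← rpow_mul hs0.le, one_div_mul_cancel hT.ne', rpow_one]
  set y : ℝ := r ^ (-(τ:ℝ)) with hydef
  have hy1 : 1 ≤ y :=
    one_le_rpow_of_pos_of_le_one_of_nonpos hr0 hr1.le (neg_nonpos.mpr (Nat.cast_nonneg τ))
  have hq' : q = r ^ T - p := by linarith
  have key : r ^ T * y = r * y ^ p := by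
    rw [hydef]
    have h2 : r * (r ^ (-(τ:ℝ))) ^ p = r ^ (1 + -(τ:ℝ) * p) := by
      rw [rpow_add hr0, rpow_one, ← rpow_mul hr0.le]
    rw [h2, ← rpow_add hr0]
    congr 1
    ring
  have hB : y ^ p ≤ 1 + p * (y - 1) := by
    have := rpow_one_add_le_one_add_mul_self (s := y - 1) (by linarith) hp0.le hp1.le
    rwa [add_sub_cancel] at this
  have hyp0 : 0 ≤ y ^ p := rpow_nonneg (by linarith) _
  have h1 : p + q * y = p + r * y ^ p - p * y := by
    rw [hq', sub_mul, key]; ring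
  rw [h1]
  nlinarith [mul_le_mul_of_nonneg_left hB hr0.le,
    mul_nonneg (mul_nonneg hp0.le (by linarith : (0:ℝ) ≤ y - 1)) (by linarith : (0:ℝ) ≤ 1 - r)]
end

section
/- Let p, q ∈ (0,1) satisfy p + q < 1 and let α be a real number with p + q ≤ α ≤ 1. Then ((p+q)/α)^{1/(1−p)} ≥ q/(α − p). -/
/-- Step-2 inequality in the proof of Lemma 5 of the paper:
for `p, q ∈ (0,1)` with `p + q < 1` and `α ∈ [p+q, 1]`,
`((p+q)/α)^(1/(1−p)) ≥ q/(α − p)`. -/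
theorem stmt_2 (p q α : ℝ) (hp : p ∈ Set.Ioo (0:ℝ) 1) (hq : q ∈ Set.Ioo (0:ℝ) 1)
    (hpq : p + q < 1) (hα1 : p + q ≤ α) (hα2 : α ≤ 1) :
    q / (α - p) ≤ ((p + q) / α) ^ ((1 : ℝ) / (1 - p)) := by
  obtain ⟨hp0, hp1⟩ := hp
  obtain ⟨hq0, hq1⟩ := hq
  have hαp : 0 < α - p := by linarith
  have hα0 : 0 < α := by linarith
  have h1p : 0 < 1 - p := by linarith
  set t : ℝ := q / (α - p) with ht
  have ht0 : 0 ≤ t := le_of_lt (div_pos hq0 hαp)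
  -- weighted AM-GM: t^(1-p) * 1^p ≤ (1-p)*t + p*1
  have hgm : t ^ (1 - p) ≤ (1 - p) * t + p := by
    have := Real.geom_mean_le_arith_mean2_weighted (le_of_lt h1p) (le_of_lt hp0)
      ht0 zero_le_one (by ring)
    simpa using this
  -- key algebraic step
  have hkey : (1 - p) * t + p ≤ (p + q) / α := by
    rw [ht, mul_div_assoc', div_add' _ _ _ hαp.ne', div_le_div_iff₀ hαp hα0]
    nlinarith [mul_nonneg (sub_nonneg.2 hα2) (sub_nonneg.2 hα1)]
  have h4 : t ^ (1 - p) ≤ (p + q) / α := le_trans hgm hkey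
  have h5 : (t ^ (1 - p)) ^ ((1:ℝ) / (1 - p)) ≤ ((p + q) / α) ^ ((1:ℝ) / (1 - p)) :=
    Real.rpow_le_rpow (Real.rpow_nonneg ht0 _) h4 (by positivity)
  rwa [← Real.rpow_mul ht0, mul_one_div, div_self (ne_of_gt h1p), Real.rpow_one] at h5
end

section
/- Let τ̄ ∈ ℕ with τ̄ ≥ 1 and let σ_0, σ_1, …, σ_{τ̄} be nonnegative reals with a := Σ_{i=0}^{τ̄} σ_i satisfying σ_0 < a < 1. Define h(s) = s − Σ_{i=0}^{τ̄} σ_i·s^{−i} for s > 0 and b' = a^{1/(1+(1−σ₀)·τ̄)}. Fix any b with b' ≤ b ≤ 1, and set α' = 1/(1 − h(b)/h(a)) and ρ = α'·b + (1−α')·a. Then α' ∈ (0,1], and every nonnegative real sequence (V(k))_{k∈ℕ} satisfying V(k+1) ≤ Σ_{i=0}^{τ̄} σ_i·V(max(k−i,0)) for all k ∈ ℕ satisfies V(k) ≤ ρ^k · V(0) for all k ∈ ℕ. -/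
/-!
The map `s ↦ ∑ σ_i s^(-i)` is convex on `(0, ∞)`, so `h` is concave. Since `h a < 0 ≤ h b` and
`α'` is the weight with `α' h(b) + (1 - α') h(a) = 0`, concavity gives `h ρ ≥ 0`, i.e.
`∑ σ_i ρ^(-i) ≤ ρ`: the sequence `ρ^k` is a supersolution of the delayed recursion, and strong
induction compares `V` with it (`ρ ≤ 1` absorbs the truncated delays `k - i = 0`).

`h a < 0` because `a^(-i) > 1` on the delayed weights. For `h b ≥ 0`, bound
`∑_{i ≥ 1} σ_i b^(-i) ≤ (a - σ_0) b^(-τ)`; it remains to see `a - σ_0 ≤ (b - σ_0) b^τ`, which is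
monotone in `b` and at `b = b'` follows from Bernoulli's inequality
`(b'^τ)^(1 - σ_0) ≤ (1 - σ_0) b'^τ + σ_0`.
-/

open Finset Real

lemma pow_sub_le_rpow_mul_rpow_neg {ρ : ℝ} (hρ0 : 0 < ρ) (hρ1 : ρ ≤ 1) (k i : ℕ) :
    ρ ^ (k - i) ≤ ρ ^ (k : ℝ) * ρ ^ (-(i : ℝ)) := by
  rw [← rpow_add hρ0, ← rpow_natCast]
  refine rpow_le_rpow_of_exponent_ge hρ0 hρ1 ?_
  have : k ≤ k - i + i := le_tsub_add
  have : (k : ℝ) ≤ ((k - i : ℕ) : ℝ) + i := by exact_mod_cast this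
  linarith

lemma rpow_one_add_sub_le_sub_mul_pow {x c : ℝ} (hx0 : 0 < x) (hx1 : x ≤ 1) (hc0 : 0 ≤ c)
    (hc1 : c ≤ 1) (τ : ℕ) : x ^ (1 + (1 - c) * τ) - c ≤ (x - c) * x ^ τ := by
  have hxτ0 : 0 ≤ x ^ τ := pow_nonneg hx0.le τ
  have hxτ1 : x ^ τ ≤ 1 := pow_le_one₀ hx0.le hx1
  have hbern : (x ^ τ) ^ (1 - c) ≤ 1 + (1 - c) * (x ^ τ - 1) := by
    simpa using rpow_one_add_le_one_add_mul_self (s := x ^ τ - 1) (by linarith)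
      (sub_nonneg.2 hc1) (by linarith)
  have hsplit : x ^ (1 + (1 - c) * τ) = x * (x ^ τ) ^ (1 - c) := by
    rw [rpow_add hx0, rpow_one, ← rpow_natCast, ← rpow_mul hx0.le, mul_comm (τ : ℝ)]
  rw [hsplit]
  -- what is left beyond Bernoulli is `c (1 - x) (1 - x ^ τ) ≥ 0`
  nlinarith [mul_nonneg (mul_nonneg hc0 (sub_nonneg.2 hx1)) (sub_nonneg.2 hxτ1)]

lemma sub_le_sub_mul_pow_of_rpow_le {a b c : ℝ} (τ : ℕ) (ha0 : 0 < a) (ha1 : a ≤ 1)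
    (hc0 : 0 ≤ c) (hca : c ≤ a) (hb : a ^ (1 / (1 + (1 - c) * τ)) ≤ b) (hb1 : b ≤ 1) :
    a - c ≤ (b - c) * b ^ τ := by
  set D : ℝ := 1 + (1 - c) * τ
  set x := a ^ (1 / D)
  have hD : 1 ≤ D := by
    have : 0 ≤ (1 - c) * τ := mul_nonneg (by linarith) τ.cast_nonneg
    linarith
  have hx0 : 0 < x := rpow_pos_of_pos ha0 _
  have hax : a ≤ x := by
    have := rpow_le_rpow_of_exponent_ge ha0 ha1 ((div_le_one (by linarith)).2 hD)
    rwa [rpow_one] at this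
  have hxD : x ^ D = a := by
    rw [← rpow_mul ha0.le, one_div_mul_cancel (by linarith), rpow_one]
  calc a - c = x ^ D - c := by rw [hxD]
    _ ≤ (x - c) * x ^ τ :=
      rpow_one_add_sub_le_sub_mul_pow hx0 (hb.trans hb1) hc0 (hca.trans ha1) τ
    _ ≤ (b - c) * b ^ τ := by gcongr; linarith

lemma one_div_one_sub_div_mem_Ioc {x y : ℝ} (hx : x < 0) (hy : 0 ≤ y) :
    1 / (1 - y / x) ∈ Set.Ioc 0 1 := by
  have : y / x ≤ 0 := div_nonpos_of_nonneg_of_nonpos hy hx.le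
  exact ⟨one_div_pos.2 (by linarith), (div_le_one (by linarith)).2 (by linarith)⟩

lemma one_div_one_sub_div_mul_add_eq_zero {x y : ℝ} (hx : x ≠ 0) (hxy : x ≠ y) :
    1 / (1 - y / x) * y + (1 - 1 / (1 - y / x)) * x = 0 := by
  have : x - y ≠ 0 := sub_ne_zero.2 hxy
  field_simp
  ring

lemma ConvexOn.map_le_self_of_weighted_gap {F : ℝ → ℝ} {S : Set ℝ} (hF : ConvexOn ℝ S F)
    {a b α : ℝ} (ha : a ∈ S) (hb : b ∈ S) (hα0 : 0 ≤ α) (hα1 : α ≤ 1)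
    (hgap : α * (b - F b) + (1 - α) * (a - F a) = 0) :
    F (α * b + (1 - α) * a) ≤ α * b + (1 - α) * a := by
  have := hF.2 hb ha hα0 (sub_nonneg.2 hα1) (by ring)
  simp only [smul_eq_mul] at this
  linarith

/-- Trying `V k = sᵏ` in the recursion turns it into `delaySum σ τ s ≤ s`; the paper's `h` is
`s - delaySum σ τ s`. -/
noncomputable def delaySum (σ : ℕ → ℝ) (τ : ℕ) (s : ℝ) : ℝ :=
  ∑ i ∈ range (τ + 1), σ i * s ^ (-(i : ℝ))

section DelaySum

variable {σ : ℕ → ℝ} {τ : ℕ}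

lemma delaySum_eq_add (s : ℝ) :
    delaySum σ τ s = σ 0 + ∑ i ∈ range τ, σ (i + 1) * s ^ (-((i : ℝ) + 1)) := by
  rw [delaySum, sum_range_succ', add_comm]
  simp

lemma convexOn_delaySum (hσ : ∀ i, 0 ≤ σ i) : ConvexOn ℝ (Set.Ioi 0) (delaySum σ τ) := by
  refine ⟨convex_Ioi 0, fun x hx y hy μ ν hμ hν hμν => ?_⟩
  have hpow (i : ℕ) :
      (μ * x + ν * y) ^ (-(i : ℝ)) ≤ μ * x ^ (-(i : ℝ)) + ν * y ^ (-(i : ℝ)) := by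
    simpa only [rpow_neg_natCast, smul_eq_mul] using
      (convexOn_zpow (-(i : ℤ))).2 hx hy hμ hν hμν
  simp only [delaySum, smul_eq_mul, mul_sum, ← sum_add_distrib]
  gcongr with i
  nlinarith [mul_le_mul_of_nonneg_left (hpow i) (hσ i)]

lemma sum_lt_delaySum (hσ : ∀ i, 0 ≤ σ i) (hσ0 : σ 0 < ∑ i ∈ range (τ + 1), σ i)
    {s : ℝ} (hs0 : 0 < s) (hs1 : s < 1) : ∑ i ∈ range (τ + 1), σ i < delaySum σ τ s := by
  have htail := eq_sub_of_add_eq (sum_range_succ' σ τ).symm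
  have hle : ∑ i ∈ range τ, σ (i + 1) * s⁻¹ ≤
      ∑ i ∈ range τ, σ (i + 1) * s ^ (-((i : ℝ) + 1)) := by
    gcongr with i
    · exact hσ _
    rw [← rpow_neg_one]
    exact rpow_le_rpow_of_exponent_ge hs0 hs1.le (by linarith [i.cast_nonneg (α := ℝ)])
  rw [← sum_mul, htail] at hle
  have hgain : 0 < (∑ i ∈ range (τ + 1), σ i - σ 0) * (s⁻¹ - 1) :=
    mul_pos (sub_pos.2 hσ0) (sub_pos.2 (one_lt_inv₀ hs0 |>.2 hs1))
  rw [delaySum_eq_add]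
  nlinarith

lemma delaySum_le_self (hσ : ∀ i, 0 ≤ σ i) {s : ℝ} (hs0 : 0 < s) (hs1 : s ≤ 1)
    (hs : ∑ i ∈ range (τ + 1), σ i - σ 0 ≤ (s - σ 0) * s ^ τ) : delaySum σ τ s ≤ s := by
  have htail := eq_sub_of_add_eq (sum_range_succ' σ τ).symm
  have hle : ∑ i ∈ range τ, σ (i + 1) * s ^ (-((i : ℝ) + 1)) ≤
      ∑ i ∈ range τ, σ (i + 1) * (s ^ τ)⁻¹ := by
    gcongr with i hi
    · exact hσ _
    rw [← rpow_natCast, ← rpow_neg hs0.le]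
    have : (i : ℝ) + 1 ≤ τ := by exact_mod_cast mem_range.1 hi
    exact rpow_le_rpow_of_exponent_ge hs0 hs1 (by linarith)
  rw [← sum_mul, htail, ← div_eq_mul_inv] at hle
  have hdiv := (div_le_iff₀ (pow_pos hs0 τ)).2 hs
  rw [delaySum_eq_add]
  linarith

lemma le_pow_mul_of_delaySum_le (hσ : ∀ i, 0 ≤ σ i) {ρ : ℝ} (hρ0 : 0 < ρ) (hρ1 : ρ ≤ 1)
    (hρ : delaySum σ τ ρ ≤ ρ) {V : ℕ → ℝ} (hV0 : 0 ≤ V 0)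
    (hrec : ∀ k, V (k + 1) ≤ ∑ i ∈ range (τ + 1), σ i * V (k - i)) (k : ℕ) :
    V k ≤ ρ ^ k * V 0 := by
  induction k using Nat.strong_induction_on with
  | _ k ih =>
    cases k with
    | zero => simp
    | succ k =>
      calc V (k + 1) ≤ ∑ i ∈ range (τ + 1), σ i * V (k - i) := hrec k
        _ ≤ ∑ i ∈ range (τ + 1), σ i * (ρ ^ (k : ℝ) * ρ ^ (-(i : ℝ)) * V 0) := by
            gcongr with i
            · exact hσ i
            exact (ih (k - i) (by omega)).trans
              (mul_le_mul_of_nonneg_right (pow_sub_le_rpow_mul_rpow_neg hρ0 hρ1 k i) hV0)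
        _ = ρ ^ (k : ℝ) * delaySum σ τ ρ * V 0 := by
            simp only [delaySum, mul_sum, sum_mul]
            exact sum_congr rfl fun i _ => by ring
        _ ≤ ρ ^ (k : ℝ) * ρ * V 0 := by gcongr
        _ = ρ ^ (k + 1) * V 0 := by rw [rpow_natCast, pow_succ]

end DelaySum

theorem stmt_4_general (τ : ℕ) (σ : ℕ → ℝ) (hσ : ∀ i, 0 ≤ σ i)
    (a : ℝ) (ha : a = ∑ i ∈ Finset.range (τ + 1), σ i)
    (hσ0 : σ 0 < a) (ha1 : a < 1)
    (h : ℝ → ℝ) (hh : ∀ s, h s = s - ∑ i ∈ Finset.range (τ + 1), σ i * s ^ (-(i : ℝ)))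
    (b' : ℝ) (hb' : b' = a ^ ((1 : ℝ) / (1 + (1 - σ 0) * (τ : ℝ))))
    (b : ℝ) (hb1 : b' ≤ b) (hb2 : b ≤ 1)
    (α' : ℝ) (hα' : α' = 1 / (1 - h b / h a))
    (ρ : ℝ) (hρ : ρ = α' * b + (1 - α') * a) :
    α' ∈ Set.Ioc (0:ℝ) 1 ∧
      ∀ V : ℕ → ℝ, (∀ k, 0 ≤ V k) →
        (∀ k, V (k + 1) ≤ ∑ i ∈ Finset.range (τ + 1), σ i * V (k - i)) →
        ∀ k, V k ≤ ρ ^ k * V 0 := by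
  have ha0 : 0 < a := (hσ 0).trans_lt hσ0
  have hb0 : 0 < b := (rpow_pos_of_pos ha0 _).trans_le (hb' ▸ hb1)
  have hha : h a < 0 := by
    have := sum_lt_delaySum hσ (ha ▸ hσ0) ha0 ha1
    rw [← ha] at this
    exact hh a ▸ sub_neg.2 this
  have hhb : 0 ≤ h b := by
    have := sub_le_sub_mul_pow_of_rpow_le τ ha0 ha1.le (hσ 0) hσ0.le (hb' ▸ hb1) hb2
    rw [ha] at this
    exact hh b ▸ sub_nonneg.2 (delaySum_le_self hσ hb0 hb2 this)
  have hα : α' ∈ Set.Ioc 0 1 := hα' ▸ one_div_one_sub_div_mem_Ioc hha hhb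
  have hgap : α' * h b + (1 - α') * h a = 0 :=
    hα' ▸ one_div_one_sub_div_mul_add_eq_zero hha.ne (by linarith)
  have hρ01 : ρ ∈ Set.Ioc 0 1 := by
    simpa [hρ] using
      convex_Ioc (0 : ℝ) 1 ⟨hb0, hb2⟩ ⟨ha0, ha1.le⟩ hα.1.le (sub_nonneg.2 hα.2) (by ring)
  have hρF : delaySum σ τ ρ ≤ ρ :=
    hρ ▸ (convexOn_delaySum hσ).map_le_self_of_weighted_gap ha0 hb0 hα.1.le hα.2
      (by simpa only [hh, delaySum] using hgap)
  exact ⟨hα, fun V hV hrec => le_pow_mul_of_delaySum_le hσ hρ01.1 hρ01.2 hρF (hV 0) hrec⟩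

/-- Lemma 6 (Lemma `randomsequencelemma`) of the paper: linear convergence of
nonnegative sequences satisfying a weighted delayed recursion, with rate
`ρ = α'·b + (1−α')·a`. -/
theorem stmt_4 (τ : ℕ) (hτ : 1 ≤ τ) (σ : ℕ → ℝ) (hσ : ∀ i, 0 ≤ σ i)
    (a : ℝ) (ha : a = ∑ i ∈ Finset.range (τ + 1), σ i)
    (hσ0 : σ 0 < a) (ha1 : a < 1)
    (h : ℝ → ℝ) (hh : ∀ s, h s = s - ∑ i ∈ Finset.range (τ + 1), σ i * s ^ (-(i : ℝ)))
    (b' : ℝ) (hb' : b' = a ^ ((1 : ℝ) / (1 + (1 - σ 0) * (τ : ℝ))))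
    (b : ℝ) (hb1 : b' ≤ b) (hb2 : b ≤ 1)
    (α' : ℝ) (hα' : α' = 1 / (1 - h b / h a))
    (ρ : ℝ) (hρ : ρ = α' * b + (1 - α') * a) :
    α' ∈ Set.Ioc (0:ℝ) 1 ∧
      ∀ V : ℕ → ℝ, (∀ k, 0 ≤ V k) →
        (∀ k, V (k + 1) ≤ ∑ i ∈ Finset.range (τ + 1), σ i * V (k - i)) →
        ∀ k, V k ≤ ρ ^ k * V 0 :=
  stmt_4_general τ σ hσ a ha hσ0 ha1 h hh b' hb' b hb1 hb2 α' hα' ρ hρ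
end

section
/- Let τ̄ ∈ ℕ with τ̄ ≥ 1 and let σ_0, σ_1, …, σ_{τ̄} be nonnegative reals with a := Σ_{i=0}^{τ̄} σ_i satisfying σ_0 < a < 1. Set b' = a^{1/(1+(1−σ₀)·τ̄)}. Then b' − Σ_{i=0}^{τ̄} σ_i·(b')^{−i} ≥ 0. -/
/-- In the setting of Lemma 6 of the paper: with `b' = a^(1/(1+(1−σ₀)·τ̄))`,
one has `h(b') = b' − Σ σ_i·(b')^{−i} ≥ 0`. -/
theorem stmt_6 (τ : ℕ) (hτ : 1 ≤ τ) (σ : ℕ → ℝ) (hσ : ∀ i, 0 ≤ σ i)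
    (a : ℝ) (ha : a = ∑ i ∈ Finset.range (τ + 1), σ i)
    (hσ0 : σ 0 < a) (ha1 : a < 1)
    (b' : ℝ) (hb' : b' = a ^ ((1 : ℝ) / (1 + (1 - σ 0) * (τ : ℝ)))) :
    0 ≤ b' - ∑ i ∈ Finset.range (τ + 1), σ i * b' ^ (-(i : ℝ)) := by
  have hσ00 : 0 ≤ σ 0 := hσ 0
  have ha0 : 0 < a := lt_of_le_of_lt hσ00 hσ0
  have hσ01 : σ 0 < 1 := hσ0.trans ha1
  have hc : 0 < 1 - σ 0 := by linarith
  have hτ0 : (0 : ℝ) < τ := by exact_mod_cast hτ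
  have hd : 0 < 1 + (1 - σ 0) * (τ : ℝ) := by positivity
  have hb0 : 0 < b' := by rw [hb']; exact Real.rpow_pos_of_pos ha0 _
  have hb1 : b' < 1 := by
    rw [hb']; exact Real.rpow_lt_one ha0.le ha1 (by positivity)
  -- a = b' ^ (1 + (1-σ0)τ)
  have hab : b' ^ ((1 : ℝ) + (1 - σ 0) * (τ : ℝ)) = a := by
    rw [hb', ← Real.rpow_mul ha0.le];
      simp [one_div, inv_mul_cancel₀ hd.ne']
  -- Step 1: bound the sum
  have hstep : ∀ i ∈ Finset.range τ,
      σ (i + 1) * b' ^ (-((i + 1 : ℕ) : ℝ)) ≤ σ (i + 1) * b' ^ (-(τ : ℝ)) := by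
    intro i hi
    apply mul_le_mul_of_nonneg_left _ (hσ _)
    apply Real.rpow_le_rpow_of_exponent_ge hb0 hb1.le
    have : (i + 1 : ℕ) ≤ τ := Finset.mem_range.mp hi
    have : ((i + 1 : ℕ) : ℝ) ≤ (τ : ℝ) := by exact_mod_cast this
    linarith
  have hsum : ∑ i ∈ Finset.range (τ + 1), σ i * b' ^ (-(i : ℝ))
      ≤ σ 0 + (a - σ 0) * b' ^ (-(τ : ℝ)) := by
    rw [Finset.sum_range_succ' (fun i => σ i * b' ^ (-(i : ℝ)))]
    have h1 : ∑ i ∈ Finset.range τ, σ (i + 1) * b' ^ (-((i + 1 : ℕ) : ℝ))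
        ≤ ∑ i ∈ Finset.range τ, σ (i + 1) * b' ^ (-(τ : ℝ)) :=
      Finset.sum_le_sum hstep
    have h2 : ∑ i ∈ Finset.range τ, σ (i + 1) * b' ^ (-(τ : ℝ))
        = (a - σ 0) * b' ^ (-(τ : ℝ)) := by
      rw [← Finset.sum_mul]
      congr 1
      rw [ha, Finset.sum_range_succ' σ]
      ring
    simp only [Nat.cast_zero, neg_zero, Real.rpow_zero, mul_one]
    calc ∑ i ∈ Finset.range τ, σ (i + 1) * b' ^ (-((i + 1 : ℕ) : ℝ)) + σ 0
        ≤ (a - σ 0) * b' ^ (-(τ : ℝ)) + σ 0 := by rw [← h2]; linarith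
      _ = σ 0 + (a - σ 0) * b' ^ (-(τ : ℝ)) := by ring
  -- Step 2: σ0 + (a - σ0) * b'^(-τ) ≤ b'
  set X : ℝ := b' ^ (-(τ : ℝ)) with hX
  have hX1 : 1 ≤ X :=
    Real.one_le_rpow_of_pos_of_le_one_of_nonpos hb0 hb1.le (by linarith)
  -- Bernoulli: X ^ σ0 ≤ 1 + σ0 * (X - 1)
  have hbern : X ^ (σ 0) ≤ 1 + σ 0 * (X - 1) := by
    have h := rpow_one_add_le_one_add_mul_self (s := X - 1) (p := σ 0)
      (by linarith) hσ00 hσ01.le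
    simpa using h
  -- rewrite (a - σ0) * X
  have hkey : (a - σ 0) * X = b' * X ^ (σ 0) - σ 0 * X := by
    have h1 : a * X = b' * X ^ (σ 0) := by
      rw [← hab, hX]
      rw [← Real.rpow_mul hb0.le, ← Real.rpow_add hb0]
      have : (1 : ℝ) + (1 - σ 0) * (τ : ℝ) + -(τ : ℝ) = 1 + -(τ : ℝ) * σ 0 := by ring
      rw [this, Real.rpow_add hb0, Real.rpow_one]
    rw [sub_mul, h1]
  have hfinal : σ 0 + (a - σ 0) * X ≤ b' := by
    rw [hkey]
    have h1 : b' * X ^ (σ 0) ≤ b' * (1 + σ 0 * (X - 1)) :=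
      mul_le_mul_of_nonneg_left hbern hb0.le
    have h2 : b' * (σ 0 * (X - 1)) ≤ 1 * (σ 0 * (X - 1)) := by
      apply mul_le_mul_of_nonneg_right hb1.le
      have := hσ00; nlinarith
    nlinarith
  linarith [hsum, hfinal]
end

section
/- Let τ̄ ∈ ℕ and let P, P' : {0,…,τ̄} → ℝ be probability distributions on {0,…,τ̄}. Suppose that P first-order stochastically dominates P', i.e., Σ_{j=0}^{i} P_j ≥ Σ_{j=0}^{i} P'_j for every i ∈ {0,…,τ̄}, and that P and P' have the same mean, Σ_{j=0}^{τ̄} j·P_j = Σ_{j=0}^{τ̄} j·P'_j. Then the variance of P is at most the variance of P': Σ_{j=0}^{τ̄} j²·P_j − (Σ_{j=0}^{τ̄} j·P_j)² ≤ Σ_{j=0}^{τ̄} j²·P'_j − (Σ_{j=0}^{τ̄} j·P'_j)². -/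
lemma mono_sum_le (τ : ℕ) (f : ℕ → ℝ) (P P' : ℕ → ℝ)
    (hf : ∀ i, f i ≤ f (i + 1))
    (hPsum : ∑ i ∈ Finset.range (τ + 1), P i = 1)
    (hP'sum : ∑ i ∈ Finset.range (τ + 1), P' i = 1)
    (hdom : ∀ i ≤ τ, ∑ j ∈ Finset.range (i + 1), P' j ≤ ∑ j ∈ Finset.range (i + 1), P j) :
    ∑ j ∈ Finset.range (τ + 1), f j * P j ≤ ∑ j ∈ Finset.range (τ + 1), f j * P' j := by
  have h1 := Finset.sum_range_by_parts f P (τ + 1)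
  have h2 := Finset.sum_range_by_parts f P' (τ + 1)
  simp only [smul_eq_mul, Nat.add_sub_cancel] at h1 h2
  rw [h1, h2, hPsum, hP'sum]
  apply sub_le_sub_left
  apply Finset.sum_le_sum
  intro i hi
  have hi' : i ≤ τ := le_of_lt (Finset.mem_range.mp hi)
  exact mul_le_mul_of_nonneg_left (hdom i hi') (sub_nonneg.mpr (hf i))

/-- Proposition 2 of the paper, second part: if `P` first-order stochastically
dominates `P'` and both have the same mean, then the variance of `P` is at most
the variance of `P'`. -/
theorem stmt_8 (τ : ℕ) (P P' : ℕ → ℝ)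
    (hP : ∀ i ≤ τ, 0 ≤ P i) (hP' : ∀ i ≤ τ, 0 ≤ P' i)
    (hPsum : ∑ i ∈ Finset.range (τ + 1), P i = 1)
    (hP'sum : ∑ i ∈ Finset.range (τ + 1), P' i = 1)
    (hdom : ∀ i ≤ τ, ∑ j ∈ Finset.range (i + 1), P' j ≤ ∑ j ∈ Finset.range (i + 1), P j)
    (hmean : ∑ j ∈ Finset.range (τ + 1), (j : ℝ) * P j
      = ∑ j ∈ Finset.range (τ + 1), (j : ℝ) * P' j) :
    (∑ j ∈ Finset.range (τ + 1), (j : ℝ) ^ 2 * P j)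
        - (∑ j ∈ Finset.range (τ + 1), (j : ℝ) * P j) ^ 2
      ≤ (∑ j ∈ Finset.range (τ + 1), (j : ℝ) ^ 2 * P' j)
        - (∑ j ∈ Finset.range (τ + 1), (j : ℝ) * P' j) ^ 2 := by
  rw [hmean]
  apply sub_le_sub_right
  apply mono_sum_le τ (fun j => (j : ℝ) ^ 2) P P' _ hPsum hP'sum hdom
  intro i
  have h : (i : ℝ) ≤ ((i + 1 : ℕ) : ℝ) := by exact_mod_cast Nat.le_succ i
  have h0 : (0:ℝ) ≤ (i : ℝ) := Nat.cast_nonneg i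
  calc ((i:ℝ))^2 ≤ ((i+1:ℕ):ℝ)^2 := by nlinarith
    _ = _ := rfl
end

section
/- Let c ∈ (0,1), let m ∈ ℕ with m ≥ 1, and let τ̄ ∈ ℕ with τ̄ ≥ 1. Set ρ_c = 1 − (1−c²)/m and ρ_a = ρ_c^{m/(m+τ̄)}. For a probability distribution P on {0,…,τ̄}, define φ_P(ρ) = ρ − ρ_c − (c²/m)·(Σ_{i=0}^{τ̄} P_i·ρ^{−i} − 1) for ρ > 0, α_P = 1/(1 − φ_P(ρ_a)/φ_P(ρ_c)), and ρ_P = α_P·ρ_a + (1−α_P)·ρ_c. Let P and P' be probability distributions on {0,…,τ̄} with P_0 < 1 and P'_0 < 1. If P first-order stochastically dominates P', i.e., Σ_{j=0}^{i} P_j ≥ Σ_{j=0}^{i} P'_j for every i ∈ {0,…,τ̄}, then ρ_P ≤ ρ_{P'}. -/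
/-! Abel summation turns first-order dominance into `∑ P i ρ^(-i) ≤ ∑ P' i ρ^(-i)` for
`0 < ρ ≤ 1`, since `i ↦ ρ^(-i)` is increasing; hence `φ' ≤ φ` on `(0, 1]`. Writing
`α = -φ(ρ_c) / (φ(ρ_a) - φ(ρ_c))`, with `φ(ρ_c) < 0 ≤ φ'(ρ_a)`, the weight `α` can only grow
when `φ` is replaced by the smaller `φ'`, and `ρ = ρ_c + α (ρ_a - ρ_c)` with `ρ_c ≤ ρ_a`.
The sign `φ'(ρ_a) ≥ 0` is checked in the worst case, all mass at `τ̄`, where it follows from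
Bernoulli's inequality after the substitution `ρ_c = ρ_a^(1 + τ̄/m)`. -/

open Finset Real

theorem sum_mul_le_sum_mul_of_partial_sums_le (n : ℕ) (P P' f : ℕ → ℝ)
    (hsum : ∑ i ∈ range (n + 1), P i = ∑ i ∈ range (n + 1), P' i)
    (hdom : ∀ i < n, ∑ j ∈ range (i + 1), P' j ≤ ∑ j ∈ range (i + 1), P j)
    (hf : ∀ i < n, f i ≤ f (i + 1)) :
    ∑ i ∈ range (n + 1), P i * f i ≤ ∑ i ∈ range (n + 1), P' i * f i := by
  have hP := sum_range_by_parts f P (n + 1)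
  have hP' := sum_range_by_parts f P' (n + 1)
  simp only [smul_eq_mul, Nat.add_sub_cancel] at hP hP'
  simp only [mul_comm (P _), mul_comm (P' _)]
  rw [hP, hP', hsum, sub_le_sub_iff_left]
  refine sum_le_sum fun i hi => ?_
  have hi := mem_range.1 hi
  exact mul_le_mul_of_nonneg_left (hdom i hi) (sub_nonneg.2 (hf i hi))

theorem sum_mul_rpow_neg_le_of_partial_sums_le {n : ℕ} {P P' : ℕ → ℝ}
    (hsum : ∑ i ∈ range (n + 1), P i = ∑ i ∈ range (n + 1), P' i)
    (hdom : ∀ i ≤ n, ∑ j ∈ range (i + 1), P' j ≤ ∑ j ∈ range (i + 1), P j)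
    {x : ℝ} (hx0 : 0 < x) (hx1 : x ≤ 1) :
    ∑ i ∈ range (n + 1), P i * x ^ (-(i : ℝ)) ≤ ∑ i ∈ range (n + 1), P' i * x ^ (-(i : ℝ)) :=
  sum_mul_le_sum_mul_of_partial_sums_le n P P' _ hsum (fun i hi => hdom i hi.le) fun i _ =>
    rpow_le_rpow_of_exponent_ge hx0 hx1 (by push_cast; linarith)

theorem one_lt_sum_mul_rpow_neg {n : ℕ} {Q : ℕ → ℝ} (hQ : ∀ i ≤ n, 0 ≤ Q i)
    (hQsum : ∑ i ∈ range (n + 1), Q i = 1) (hQ0 : Q 0 < 1) {x : ℝ} (hx0 : 0 < x) (hx1 : x < 1) :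
    1 < ∑ i ∈ range (n + 1), Q i * x ^ (-(i : ℝ)) := by
  rw [sum_range_succ'] at hQsum ⊢
  have hx : 1 < x⁻¹ := one_lt_inv₀ hx0 |>.2 hx1
  have htail : ∑ i ∈ range n, Q (i + 1) * x⁻¹ ≤
      ∑ i ∈ range n, Q (i + 1) * x ^ (-((i + 1 : ℕ) : ℝ)) := by
    refine sum_le_sum fun i hi => mul_le_mul_of_nonneg_left ?_ (hQ _ (by simp at hi; omega))
    rw [← rpow_neg_one]
    exact rpow_le_rpow_of_exponent_ge hx0 hx1.le
      (by push_cast; linarith [(i.cast_nonneg : (0 : ℝ) ≤ i)])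
  rw [← sum_mul] at htail
  simp only [CharP.cast_eq_zero, neg_zero, rpow_zero, mul_one]
  nlinarith

theorem sum_mul_rpow_neg_le_rpow_neg {n : ℕ} {Q : ℕ → ℝ} (hQ : ∀ i ≤ n, 0 ≤ Q i)
    (hQsum : ∑ i ∈ range (n + 1), Q i = 1) {x : ℝ} (hx0 : 0 < x) (hx1 : x ≤ 1) :
    ∑ i ∈ range (n + 1), Q i * x ^ (-(i : ℝ)) ≤ x ^ (-(n : ℝ)) :=
  calc ∑ i ∈ range (n + 1), Q i * x ^ (-(i : ℝ))
      ≤ ∑ i ∈ range (n + 1), Q i * x ^ (-(n : ℝ)) := by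
        refine sum_le_sum fun i hi => ?_
        have hi : i ≤ n := Nat.lt_succ_iff.1 (mem_range.1 hi)
        exact mul_le_mul_of_nonneg_left
          (rpow_le_rpow_of_exponent_ge hx0 hx1 (by simp [hi])) (hQ i hi)
    _ = x ^ (-(n : ℝ)) := by rw [← sum_mul, hQsum, one_mul]

theorem rpow_sub_rpow_add_le {u m τ : ℝ} (hu0 : 0 < u) (hu1 : u ≤ 1) (hm : 1 ≤ m) (hτ : 0 ≤ τ) :
    u ^ m - u ^ (m + τ) ≤ m * (u - u ^ (1 + τ / m)) := by
  have hm0 : 0 < m := by linarith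
  set v := u ^ (τ / m) with hv
  have hv0 : 0 < v := rpow_pos_of_pos hu0 _
  have hbern : 1 + m * (v - 1) ≤ u ^ τ := by
    have := one_add_mul_self_le_rpow_one_add (s := v - 1) (by linarith) hm
    rwa [add_sub_cancel, hv, ← rpow_mul hu0.le, div_mul_cancel₀ _ hm0.ne'] at this
  have hum : u ^ m ≤ u := rpow_le_self_of_le_one hu0.le hu1 hm
  have huτ : u ^ τ ≤ 1 := rpow_le_one hu0.le hu1 hτ
  calc u ^ m - u ^ (m + τ) = u ^ m * (1 - u ^ τ) := by rw [rpow_add hu0]; ring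
    _ ≤ u * (1 - u ^ τ) := mul_le_mul_of_nonneg_right hum (by linarith)
    _ ≤ u * (m * (1 - v)) := mul_le_mul_of_nonneg_left (by linarith) hu0.le
    _ = m * (u - u ^ (1 + τ / m)) := by rw [rpow_add hu0, rpow_one]; ring

theorem div_mul_rpow_neg_sub_one_le {a x m τ : ℝ} (hx0 : 0 < x) (hx1 : x ≤ 1) (hm : 1 ≤ m)
    (hτ : 0 ≤ τ) (ha : a ≤ x ^ m) :
    a / m * ((x ^ (m / (m + τ))) ^ (-τ) - 1) ≤ x ^ (m / (m + τ)) - x := by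
  have hm0 : 0 < m := by linarith
  set u := x ^ (m / (m + τ)) with hu
  have hu0 : 0 < u := rpow_pos_of_pos hx0 _
  have hu1 : u ≤ 1 := rpow_le_one hx0.le hx1 (by positivity)
  have hxu : ∀ y, x ^ y = u ^ (y * ((m + τ) / m)) := fun y => by
    rw [hu, ← rpow_mul hx0.le]; congr 1; field_simp
  have hxm : x ^ m = u ^ (m + τ) := by rw [hxu]; congr 1; field_simp
  have hx : x = u ^ (1 + τ / m) := by rw [← rpow_one x, hxu]; congr 1; field_simp
  have hneg : 0 ≤ u ^ (-τ) - 1 :=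
    sub_nonneg.2 (one_le_rpow_of_pos_of_le_one_of_nonpos hu0 hu1 (by linarith))
  rw [div_mul_eq_mul_div, div_le_iff₀ hm0]
  calc a * (u ^ (-τ) - 1) ≤ u ^ (m + τ) * (u ^ (-τ) - 1) :=
        mul_le_mul_of_nonneg_right (hxm ▸ ha) hneg
    _ = u ^ m - u ^ (m + τ) := by rw [mul_sub, ← rpow_add hu0]; ring_nf
    _ ≤ m * (u - u ^ (1 + τ / m)) := rpow_sub_rpow_add_le hu0 hu1 hm hτ
    _ = (u - x) * m := by rw [← hx]; ring

theorem one_div_one_sub_div_le_one_div_one_sub_div {a a' b b' : ℝ} (ha : a' ≤ a) (ha0 : a < 0)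
    (hb : b' ≤ b) (hb0 : 0 ≤ b') : 1 / (1 - b / a) ≤ 1 / (1 - b' / a') := by
  have hab : b' / -a' ≤ b / -a := by gcongr <;> linarith
  rw [div_neg, div_neg] at hab
  apply one_div_le_one_div_of_le
  · have : b' / a' ≤ 0 := div_nonpos_of_nonneg_of_nonpos hb0 (by linarith)
    linarith
  · linarith

theorem one_sub_one_sub_div_mem_Ioo {a m : ℝ} (ha0 : 0 < a) (ha1 : a < 1) (hm : 1 ≤ m) :
    1 - (1 - a) / m ∈ Set.Ioo 0 1 := by
  have hle := div_le_self (sub_nonneg.2 ha1.le) hm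
  have hpos := div_pos (sub_pos.2 ha1) (by linarith : 0 < m)
  constructor <;> linarith

theorem le_one_sub_one_sub_div_rpow {a m : ℝ} (ha : 0 ≤ a) (hm : 1 ≤ m) :
    a ≤ (1 - (1 - a) / m) ^ m := by
  have hm0 : 0 < m := by linarith
  have h := one_add_mul_self_le_rpow_one_add (s := -((1 - a) / m)) ?_ hm
  · rwa [mul_neg, mul_div_cancel₀ _ hm0.ne', ← sub_eq_add_neg, ← sub_eq_add_neg,
      sub_sub_cancel] at h
  · rw [neg_le_neg_iff, div_le_one hm0]; linarith

theorem stmt_10_general (c : ℝ) (hc : c ∈ Set.Ioo (0:ℝ) 1) (m τ : ℕ) (hm : 1 ≤ m)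
    (P P' : ℕ → ℝ)
    (hP : ∀ i ≤ τ, 0 ≤ P i) (hP' : ∀ i ≤ τ, 0 ≤ P' i)
    (hPsum : ∑ i ∈ Finset.range (τ + 1), P i = 1)
    (hP'sum : ∑ i ∈ Finset.range (τ + 1), P' i = 1)
    (hP0 : P 0 < 1)
    (ρc ρa : ℝ) (hρc : ρc = 1 - (1 - c ^ 2) / (m : ℝ))
    (hρa : ρa = ρc ^ ((m : ℝ) / ((m : ℝ) + (τ : ℝ))))
    (φ φ' : ℝ → ℝ)
    (hφ : ∀ ρ, φ ρ = ρ - ρc -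
      (c ^ 2 / (m : ℝ)) * ((∑ i ∈ Finset.range (τ + 1), P i * ρ ^ (-(i : ℝ))) - 1))
    (hφ' : ∀ ρ, φ' ρ = ρ - ρc -
      (c ^ 2 / (m : ℝ)) * ((∑ i ∈ Finset.range (τ + 1), P' i * ρ ^ (-(i : ℝ))) - 1))
    (αP αP' : ℝ) (hαP : αP = 1 / (1 - φ ρa / φ ρc)) (hαP' : αP' = 1 / (1 - φ' ρa / φ' ρc))
    (ρP ρP' : ℝ) (hρP : ρP = αP * ρa + (1 - αP) * ρc)
    (hρP' : ρP' = αP' * ρa + (1 - αP') * ρc)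
    (hdom : ∀ i ≤ τ, ∑ j ∈ Finset.range (i + 1), P' j ≤ ∑ j ∈ Finset.range (i + 1), P j) :
    ρP ≤ ρP' := by
  obtain ⟨hc0, hc1⟩ := hc
  have hmR : (1 : ℝ) ≤ m := by exact_mod_cast hm
  have hk : 0 < c ^ 2 / m := by positivity
  obtain ⟨hρc0, hρc1⟩ : ρc ∈ Set.Ioo 0 1 :=
    hρc ▸ one_sub_one_sub_div_mem_Ioo (by positivity) (pow_lt_one₀ hc0.le hc1 two_ne_zero) hmR
  have hs : (m : ℝ) / (m + τ) ≤ 1 := div_le_one_of_le₀ (by simp) (by positivity)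
  have hρca : ρc ≤ ρa := hρa ▸ self_le_rpow_of_le_one hρc0.le hρc1.le hs
  have hρa0 : 0 < ρa := hρc0.trans_le hρca
  have hρa1 : ρa ≤ 1 := hρa ▸ rpow_le_one hρc0.le hρc1.le (by positivity)
  have hφ'le : ∀ ρ, 0 < ρ → ρ ≤ 1 → φ' ρ ≤ φ ρ := fun ρ h0 h1 => by
    rw [hφ, hφ']
    gcongr _ - _ - _ * (?_ - _)
    exact sum_mul_rpow_neg_le_of_partial_sums_le (hPsum.trans hP'sum.symm) hdom h0 h1
  have hφc : φ ρc < 0 := by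
    have := mul_pos hk (sub_pos.2 (one_lt_sum_mul_rpow_neg hP hPsum hP0 hρc0 hρc1))
    rw [hφ]; linarith
  have hφ'a : 0 ≤ φ' ρa := by
    have hcore := div_mul_rpow_neg_sub_one_le hρc0 hρc1.le hmR (Nat.cast_nonneg τ)
      (hρc ▸ le_one_sub_one_sub_div_rpow (sq_nonneg c) hmR)
    have hworst := sum_mul_rpow_neg_le_rpow_neg hP' hP'sum hρa0 hρa1
    rw [← hρa] at hcore
    have := mul_le_mul_of_nonneg_left (sub_le_sub_right hworst 1) hk.le
    rw [hφ']; linarith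
  have hα : αP ≤ αP' := hαP ▸ hαP' ▸ one_div_one_sub_div_le_one_div_one_sub_div
    (hφ'le ρc hρc0 hρc1.le) hφc (hφ'le ρa hρa0 hρa1) hφ'a
  have := mul_le_mul_of_nonneg_right hα (sub_nonneg.2 hρca)
  rw [hρP, hρP']; linarith

/-- Lemma 1 of the paper: if the delay distribution `P` first-order stochastically
dominates `P'`, then the convergence factor satisfies `ρ_P ≤ ρ_{P'}`. -/
theorem stmt_10 (c : ℝ) (hc : c ∈ Set.Ioo (0:ℝ) 1) (m τ : ℕ) (hm : 1 ≤ m) (hτ : 1 ≤ τ)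
    (P P' : ℕ → ℝ)
    (hP : ∀ i ≤ τ, 0 ≤ P i) (hP' : ∀ i ≤ τ, 0 ≤ P' i)
    (hPsum : ∑ i ∈ Finset.range (τ + 1), P i = 1)
    (hP'sum : ∑ i ∈ Finset.range (τ + 1), P' i = 1)
    (hP0 : P 0 < 1) (hP'0 : P' 0 < 1)
    (ρc ρa : ℝ) (hρc : ρc = 1 - (1 - c ^ 2) / (m : ℝ))
    (hρa : ρa = ρc ^ ((m : ℝ) / ((m : ℝ) + (τ : ℝ))))
    (φ φ' : ℝ → ℝ)
    (hφ : ∀ ρ, φ ρ = ρ - ρc -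
      (c ^ 2 / (m : ℝ)) * ((∑ i ∈ Finset.range (τ + 1), P i * ρ ^ (-(i : ℝ))) - 1))
    (hφ' : ∀ ρ, φ' ρ = ρ - ρc -
      (c ^ 2 / (m : ℝ)) * ((∑ i ∈ Finset.range (τ + 1), P' i * ρ ^ (-(i : ℝ))) - 1))
    (αP αP' : ℝ) (hαP : αP = 1 / (1 - φ ρa / φ ρc)) (hαP' : αP' = 1 / (1 - φ' ρa / φ' ρc))
    (ρP ρP' : ℝ) (hρP : ρP = αP * ρa + (1 - αP) * ρc)
    (hρP' : ρP' = αP' * ρa + (1 - αP') * ρc)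
    (hdom : ∀ i ≤ τ, ∑ j ∈ Finset.range (i + 1), P' j ≤ ∑ j ∈ Finset.range (i + 1), P j) :
    ρP ≤ ρP' :=
  stmt_10_general c hc m τ hm P P' hP hP' hPsum hP'sum hP0 ρc ρa hρc hρa φ φ' hφ hφ' αP αP' hαP hαP'
    ρP ρP' hρP hρP' hdom
end

section
/- Let c ∈ (0,1), let m ∈ ℕ with m ≥ 1, let τ̄ ∈ ℕ with τ̄ ≥ 1, and let P be a probability distribution on {0,…,τ̄} with P_0 < 1. Set ρ_c = 1 − (1−c²)/m and ρ_a = ρ_c^{m/(m+τ̄)}, define φ_P(ρ) = ρ − ρ_c − (c²/m)·(Σ_{i=0}^{τ̄} P_i·ρ^{−i} − 1), α_P = 1/(1 − φ_P(ρ_a)/φ_P(ρ_c)), and ρ_P = α_P·ρ_a + (1−α_P)·ρ_c. Then: (i) φ_P(ρ_c) < 0 and φ_P(ρ_a) ≥ 0, so α_P ∈ (0,1]; and (ii) every nonnegative real sequence (V(k))_{k∈ℕ} satisfying V(k+1) ≤ (1 − (1−c²·P_0)/m)·V(k) + Σ_{i=1}^{τ̄} (c²·P_i/m)·V(max(k−i,0))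 for all k ∈ ℕ satisfies V(k) ≤ ρ_P^k · V(0) for all k ∈ ℕ. -/
/-!
Since `ρ ↦ ∑ P_i ρ^{-i}` is convex on `(0, ∞)`, `φ_P` is concave there, and `α_P` is chosen so
that `α_P φ_P(ρ_a) + (1 - α_P) φ_P(ρ_c) = 0`; hence `φ_P(ρ_P) ≥ 0`. Rearranged, `φ_P(ρ) ≥ 0` says
that the coefficients `a, b_i` of the recursion satisfy `a + ∑ b_i ρ^{-i} ≤ ρ`, so `ρ^k V(0)` is a
supersolution and strong induction gives `V(k) ≤ ρ^k V(0)` (for `ρ ≤ 1`, which also absorbs the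
truncation `max(k - i, 0)`).

The sign `φ_P(ρ_a) ≥ 0` follows from `∑ P_i ρ_a^{-i} ≤ ρ_a^{-τ}` and Bernoulli's inequality
`z^m ≥ 1 - m (1 - z)` for `z = ρ_c^{τ/(m+τ)}`, using `ρ_a z = ρ_c` and `z^m = ρ_a^τ`.
-/

open Finset

lemma sum_range_succ_eq_add_sum_Icc {M : Type*} [AddCommMonoid M] (f : ℕ → M) (n : ℕ) :
    ∑ i ∈ range (n + 1), f i = f 0 + ∑ i ∈ Icc 1 n, f i := by
  rw [range_eq_Ico, sum_eq_sum_Ico_succ_bot n.succ_pos, zero_add, Nat.succ_eq_add_one,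
    Ico_add_one_right_eq_Icc]

lemma pow_sub_le_pow_mul_rpow_neg {ρ : ℝ} (hρ0 : 0 < ρ) (hρ1 : ρ ≤ 1) (k i : ℕ) :
    ρ ^ (k - i) ≤ ρ ^ k * ρ ^ (-(i : ℝ)) := by
  rw [← Real.rpow_natCast, ← Real.rpow_natCast, ← Real.rpow_add hρ0]
  refine Real.rpow_le_rpow_of_exponent_ge hρ0 hρ1 ?_
  have : (k : ℝ) ≤ ((k - i : ℕ) : ℝ) + i := by exact_mod_cast le_tsub_add
  linarith

lemma le_pow_mul_of_delayed_recurrence {V b : ℕ → ℝ} {a ρ : ℝ} {s : Finset ℕ}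
    (ha : 0 ≤ a) (hb : ∀ i ∈ s, 0 ≤ b i) (hρ0 : 0 < ρ) (hρ1 : ρ ≤ 1)
    (hρ : a + ∑ i ∈ s, b i * ρ ^ (-(i : ℝ)) ≤ ρ) (hV0 : 0 ≤ V 0)
    (hrec : ∀ k, V (k + 1) ≤ a * V k + ∑ i ∈ s, b i * V (k - i)) (k : ℕ) :
    V k ≤ ρ ^ k * V 0 := by
  induction k using Nat.strong_induction_on with
  | _ k ih =>
    rcases k with _ | k
    · simp
    have hdelay : ∀ i ∈ s, b i * V (k - i) ≤ b i * ρ ^ (-(i : ℝ)) * (ρ ^ k * V 0) := by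
      intro i hi
      calc b i * V (k - i) ≤ b i * (ρ ^ (k - i) * V 0) :=
            mul_le_mul_of_nonneg_left (ih _ (by omega)) (hb i hi)
        _ ≤ b i * (ρ ^ k * ρ ^ (-(i : ℝ)) * V 0) := by
            gcongr
            · exact hb i hi
            · exact pow_sub_le_pow_mul_rpow_neg hρ0 hρ1 k i
        _ = b i * ρ ^ (-(i : ℝ)) * (ρ ^ k * V 0) := by ring
    calc V (k + 1) ≤ a * V k + ∑ i ∈ s, b i * V (k - i) := hrec k
      _ ≤ a * (ρ ^ k * V 0) + ∑ i ∈ s, b i * ρ ^ (-(i : ℝ)) * (ρ ^ k * V 0) :=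
          add_le_add (mul_le_mul_of_nonneg_left (ih k k.lt_succ_self) ha) (sum_le_sum hdelay)
      _ = (a + ∑ i ∈ s, b i * ρ ^ (-(i : ℝ))) * (ρ ^ k * V 0) := by rw [add_mul, sum_mul]
      _ ≤ ρ * (ρ ^ k * V 0) := by gcongr
      _ = ρ ^ (k + 1) * V 0 := by ring

lemma mul_sub_le_pow_mul_sub {x z : ℝ} (hx1 : x ≤ 1) (hz0 : 0 ≤ z) (hz1 : z ≤ 1)
    {m : ℕ} (hm : 1 ≤ m) : x * z - (1 - 1 / m) ≤ z ^ m * (x - (1 - 1 / m)) := by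
  have hm0 : (0 : ℝ) < m := by exact_mod_cast hm
  have hzm : z ^ m ≤ z := pow_le_of_le_one hz0 hz1 (by omega)
  have hbernoulli : 1 - z ^ m ≤ m * (1 - z) := by
    have := one_add_mul_le_pow (a := z - 1) (by linarith) m
    rw [add_sub_cancel] at this
    linarith
  have : (1 - z ^ m) / m ≤ 1 - z := by rwa [div_le_iff₀' hm0]
  have : x * (z - z ^ m) ≤ z - z ^ m := mul_le_of_le_one_left (by linarith) hx1
  rw [div_eq_mul_inv] at *
  nlinarith

lemma one_div_one_sub_div_mem_Ioc_s11 {a b : ℝ} (ha : 0 ≤ a) (hb : b < 0) :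
    1 / (1 - a / b) ∈ Set.Ioc 0 1 := by
  have : 1 ≤ 1 - a / b := by linarith [div_nonpos_of_nonneg_of_nonpos ha hb.le]
  exact ⟨by positivity, (div_le_one₀ (by linarith)).2 this⟩

lemma one_div_one_sub_div_mul_add {a b : ℝ} (hb : b ≠ 0) (hab : a ≠ b) :
    1 / (1 - a / b) * a + (1 - 1 / (1 - a / b)) * b = 0 := by
  have : b - a ≠ 0 := sub_ne_zero.2 hab.symm
  field_simp
  ring

noncomputable def delayMoment (P : ℕ → ℝ) (τ : ℕ) (ρ : ℝ) : ℝ :=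
  ∑ i ∈ range (τ + 1), P i * ρ ^ (-(i : ℝ))

lemma delayMoment_eq (P : ℕ → ℝ) (τ : ℕ) (ρ : ℝ) :
    delayMoment P τ ρ = P 0 + ∑ i ∈ Icc 1 τ, P i * ρ ^ (-(i : ℝ)) := by
  simp [delayMoment, sum_range_succ_eq_add_sum_Icc]

section delayMoment

variable {P : ℕ → ℝ} {τ : ℕ}

lemma one_lt_delayMoment (hP : ∀ i ≤ τ, 0 ≤ P i) (hsum : ∑ i ∈ range (τ + 1), P i = 1)
    (hP0 : P 0 < 1) {ρ : ℝ} (hρ0 : 0 < ρ) (hρ1 : ρ < 1) : 1 < delayMoment P τ ρ := by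
  rw [sum_range_succ_eq_add_sum_Icc] at hsum
  have hinv : ρ⁻¹ * ∑ i ∈ Icc 1 τ, P i ≤ ∑ i ∈ Icc 1 τ, P i * ρ ^ (-(i : ℝ)) := by
    rw [mul_sum]
    refine sum_le_sum fun i hi => ?_
    rw [mem_Icc] at hi
    rw [mul_comm, ← Real.rpow_neg_one]
    refine mul_le_mul_of_nonneg_left (Real.rpow_le_rpow_of_exponent_ge hρ0 hρ1.le ?_) (hP i hi.2)
    simpa using hi.1
  rw [show ∑ i ∈ Icc 1 τ, P i = 1 - P 0 by linarith] at hinv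
  have : 1 - P 0 < ρ⁻¹ * (1 - P 0) := lt_mul_left (by linarith) (one_lt_inv₀ hρ0 |>.2 hρ1)
  rw [delayMoment_eq]
  linarith

lemma delayMoment_le_rpow_neg (hP : ∀ i ≤ τ, 0 ≤ P i) (hsum : ∑ i ∈ range (τ + 1), P i = 1)
    {ρ : ℝ} (hρ0 : 0 < ρ) (hρ1 : ρ ≤ 1) : delayMoment P τ ρ ≤ ρ ^ (-(τ : ℝ)) := by
  calc delayMoment P τ ρ ≤ ∑ i ∈ range (τ + 1), P i * ρ ^ (-(τ : ℝ)) := by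
        refine sum_le_sum fun i hi => ?_
        have hi : i ≤ τ := Nat.lt_succ_iff.mp (mem_range.mp hi)
        refine mul_le_mul_of_nonneg_left (Real.rpow_le_rpow_of_exponent_ge hρ0 hρ1 ?_) (hP i hi)
        simpa using hi
    _ = ρ ^ (-(τ : ℝ)) := by rw [← sum_mul, hsum, one_mul]

lemma convexOn_delayMoment (hP : ∀ i ≤ τ, 0 ≤ P i) :
    ConvexOn ℝ (Set.Ioi 0) (delayMoment P τ) := by
  refine ⟨convex_Ioi 0, fun x hx y hy a b ha hb hab => ?_⟩
  simp only [delayMoment, smul_eq_mul, mul_sum]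
  rw [← sum_add_distrib]
  refine sum_le_sum fun i hi => ?_
  have hi : i ≤ τ := Nat.lt_succ_iff.mp (mem_range.mp hi)
  have := (convexOn_zpow (𝕜 := ℝ) (-(i : ℤ))).2 hx hy ha hb hab
  simp only [smul_eq_mul] at this
  simp only [Real.rpow_neg_natCast]
  nlinarith [hP i hi]

lemma sub_mul_delayMoment_rpow_sub_one_le (hP : ∀ i ≤ τ, 0 ≤ P i)
    (hsum : ∑ i ∈ range (τ + 1), P i = 1) {m : ℕ} (hm : 1 ≤ m) {ρ : ℝ} (hρ0 : 0 < ρ)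
    (hρ1 : ρ ≤ 1) (hρm : 1 - 1 / m ≤ ρ) :
    (ρ - (1 - 1 / m)) * (delayMoment P τ (ρ ^ ((m : ℝ) / (m + τ))) - 1) ≤
      ρ ^ ((m : ℝ) / (m + τ)) - ρ := by
  have hmτ : (0 : ℝ) < m + τ := by positivity
  set x := ρ ^ ((m : ℝ) / (m + τ))
  set z := ρ ^ ((τ : ℝ) / (m + τ))
  have hx0 : 0 < x := Real.rpow_pos_of_pos hρ0 _
  have hx1 : x ≤ 1 := Real.rpow_le_one hρ0.le hρ1 (by positivity)
  have hxz : x * z = ρ := by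
    rw [← Real.rpow_add hρ0, ← add_div, div_self hmτ.ne', Real.rpow_one]
  have hzx : z ^ m = x ^ τ := by
    simp only [x, z, ← Real.rpow_natCast, ← Real.rpow_mul hρ0.le]
    ring_nf
  have hbound : ρ - (1 - 1 / m) ≤ (x - (1 - 1 / m)) * x ^ τ := by
    have := mul_sub_le_pow_mul_sub (z := z) hx1 (Real.rpow_nonneg hρ0.le _)
      (Real.rpow_le_one hρ0.le hρ1 (by positivity)) hm
    rwa [hxz, hzx, mul_comm] at this
  have hS : delayMoment P τ x ≤ (x ^ τ)⁻¹ := by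
    simpa [Real.rpow_neg hx0.le] using delayMoment_le_rpow_neg hP hsum hx0 hx1
  calc (ρ - (1 - 1 / m)) * (delayMoment P τ x - 1)
      ≤ (ρ - (1 - 1 / m)) * ((x ^ τ)⁻¹ - 1) := by gcongr
    _ = (ρ - (1 - 1 / m)) / x ^ τ - (ρ - (1 - 1 / m)) := by ring
    _ ≤ (x - (1 - 1 / m)) - (ρ - (1 - 1 / m)) := by
        gcongr
        exact (div_le_iff₀ (pow_pos hx0 τ)).2 hbound
    _ = x - ρ := by ring

lemma concaveOn_sub_sub_mul_delayMoment (hP : ∀ i ≤ τ, 0 ≤ P i)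
    (r : ℝ) {κ : ℝ} (hκ : 0 ≤ κ) :
    ConcaveOn ℝ (Set.Ioi 0) fun ρ => ρ - r - κ * (delayMoment P τ ρ - 1) := by
  refine (((concaveOn_id (convex_Ioi 0)).add_const (κ - r)).sub
    ((convexOn_delayMoment hP).smul hκ)).congr fun ρ _ => ?_
  simp only [Pi.sub_apply, Pi.add_apply, id, smul_eq_mul]
  ring

end delayMoment

lemma add_sum_delay_coeffs_eq (c : ℝ) (m τ : ℕ) (P : ℕ → ℝ) (ρ : ℝ) :
    1 - (1 - c ^ 2 * P 0) / m + ∑ i ∈ Icc 1 τ, c ^ 2 * P i / m * ρ ^ (-(i : ℝ)) =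
      1 - (1 - c ^ 2) / m + c ^ 2 / m * (delayMoment P τ ρ - 1) := by
  rw [delayMoment_eq, mul_sub, mul_add, mul_sum]
  simp only [mul_div_right_comm _ (P _), mul_assoc]
  ring

lemma one_sub_one_sub_div_nonneg {t : ℝ} (ht : 0 ≤ t) {m : ℕ} (hm : 1 ≤ m) :
    0 ≤ 1 - (1 - t) / m := by
  have hm1 : (1 : ℝ) ≤ m := by exact_mod_cast hm
  rw [sub_nonneg, div_le_one₀ (by positivity)]
  linarith

lemma one_sub_one_sub_sq_div_mem_Ioo {c : ℝ} (hc : c ∈ Set.Ioo 0 1) {m : ℕ} (hm : 1 ≤ m) :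
    1 - (1 - c ^ 2) / m ∈ Set.Ioo 0 1 := by
  obtain ⟨hc0, hc1⟩ := hc
  have hc2 : 0 < 1 - c ^ 2 := by nlinarith
  have hm1 : (1 : ℝ) ≤ m := by exact_mod_cast hm
  constructor
  · linarith [div_le_self hc2.le hm1, pow_pos hc0 2]
  · linarith [div_pos hc2 (by positivity : (0 : ℝ) < m)]

theorem stmt_11_general (c : ℝ) (hc : c ∈ Set.Ioo (0:ℝ) 1) (m τ : ℕ) (hm : 1 ≤ m)
    (P : ℕ → ℝ) (hP : ∀ i ≤ τ, 0 ≤ P i)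
    (hPsum : ∑ i ∈ Finset.range (τ + 1), P i = 1) (hP0 : P 0 < 1)
    (ρc ρa : ℝ) (hρc : ρc = 1 - (1 - c ^ 2) / (m : ℝ))
    (hρa : ρa = ρc ^ ((m : ℝ) / ((m : ℝ) + (τ : ℝ))))
    (φ : ℝ → ℝ)
    (hφ : ∀ ρ, φ ρ = ρ - ρc -
      (c ^ 2 / (m : ℝ)) * ((∑ i ∈ Finset.range (τ + 1), P i * ρ ^ (-(i : ℝ))) - 1))
    (αP : ℝ) (hαP : αP = 1 / (1 - φ ρa / φ ρc))
    (ρP : ℝ) (hρP : ρP = αP * ρa + (1 - αP) * ρc) :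
    (φ ρc < 0 ∧ 0 ≤ φ ρa ∧ αP ∈ Set.Ioc (0:ℝ) 1) ∧
      ∀ V : ℕ → ℝ, (∀ k, 0 ≤ V k) →
        (∀ k, V (k + 1) ≤ (1 - (1 - c ^ 2 * P 0) / (m : ℝ)) * V k +
          ∑ i ∈ Finset.Icc 1 τ, (c ^ 2 * P i / (m : ℝ)) * V (k - i)) →
        ∀ k, V k ≤ ρP ^ k * V 0 := by
  obtain ⟨hρc0, hρc1⟩ := hρc ▸ one_sub_one_sub_sq_div_mem_Ioo hc hm
  have hκ : 0 < c ^ 2 / m := by have := hc.1; positivity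
  have hρa01 : ρa ∈ Set.Ioc 0 1 := by
    rw [hρa]; exact ⟨by positivity, Real.rpow_le_one hρc0.le hρc1.le (by positivity)⟩
  replace hφ : φ = fun ρ => ρ - ρc - c ^ 2 / m * (delayMoment P τ ρ - 1) := funext hφ
  have hφc : φ ρc < 0 := by
    rw [hφ]; nlinarith [one_lt_delayMoment hP hPsum hP0 hρc0 hρc1]
  have hφa : 0 ≤ φ ρa := by
    have hκρc : c ^ 2 / m = ρc - (1 - 1 / m) := by rw [hρc]; ring
    have := sub_mul_delayMoment_rpow_sub_one_le hP hPsum hm hρc0 hρc1.le (by linarith)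
    rw [hφ, hρa, hκρc]; push_cast at this ⊢; linarith
  have hα := hαP ▸ one_div_one_sub_div_mem_Ioc_s11 hφa hφc
  have hρP01 : ρP ∈ Set.Ioc 0 1 := by
    simpa only [hρP, smul_eq_mul] using convex_Ioc (0 : ℝ) 1 hρa01 ⟨hρc0, hρc1.le⟩ hα.1.le
      (sub_nonneg.2 hα.2) (add_sub_cancel _ _)
  have hφP : 0 ≤ φ ρP := by
    have hcomb := hαP ▸ one_div_one_sub_div_mul_add hφc.ne (by linarith)
    have hconc := hφ ▸ concaveOn_sub_sub_mul_delayMoment hP ρc hκ.le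
    simpa only [hρP, hcomb, smul_eq_mul] using hconc.2 hρa01.1 hρc0 hα.1.le (sub_nonneg.2 hα.2)
      (add_sub_cancel _ _)
  refine ⟨⟨hφc, hφa, hα⟩, fun V hV hrec k => le_pow_mul_of_delayed_recurrence ?_ ?_ hρP01.1
    hρP01.2 ?_ (hV 0) hrec k⟩
  · exact one_sub_one_sub_div_nonneg (mul_nonneg (sq_nonneg c) (hP 0 τ.zero_le)) hm
  · intro i hi; have := hP i (mem_Icc.1 hi).2; positivity
  · rw [add_sum_delay_coeffs_eq, ← hρc]
    have := congrFun hφ ρP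
    linarith

/-- The deterministic core of Theorem 2 of the paper: with
`φ_P(ρ_c) < 0 ≤ φ_P(ρ_a)` and `α_P ∈ (0,1]`, every nonnegative sequence satisfying
the expected delayed recursion converges linearly with factor
`ρ_P = α_P·ρ_a + (1−α_P)·ρ_c`. -/
theorem stmt_11 (c : ℝ) (hc : c ∈ Set.Ioo (0:ℝ) 1) (m τ : ℕ) (hm : 1 ≤ m) (hτ : 1 ≤ τ)
    (P : ℕ → ℝ) (hP : ∀ i ≤ τ, 0 ≤ P i)
    (hPsum : ∑ i ∈ Finset.range (τ + 1), P i = 1) (hP0 : P 0 < 1)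
    (ρc ρa : ℝ) (hρc : ρc = 1 - (1 - c ^ 2) / (m : ℝ))
    (hρa : ρa = ρc ^ ((m : ℝ) / ((m : ℝ) + (τ : ℝ))))
    (φ : ℝ → ℝ)
    (hφ : ∀ ρ, φ ρ = ρ - ρc -
      (c ^ 2 / (m : ℝ)) * ((∑ i ∈ Finset.range (τ + 1), P i * ρ ^ (-(i : ℝ))) - 1))
    (αP : ℝ) (hαP : αP = 1 / (1 - φ ρa / φ ρc))
    (ρP : ℝ) (hρP : ρP = αP * ρa + (1 - αP) * ρc) :
    (φ ρc < 0 ∧ 0 ≤ φ ρa ∧ αP ∈ Set.Ioc (0:ℝ) 1) ∧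
      ∀ V : ℕ → ℝ, (∀ k, 0 ≤ V k) →
        (∀ k, V (k + 1) ≤ (1 - (1 - c ^ 2 * P 0) / (m : ℝ)) * V k +
          ∑ i ∈ Finset.Icc 1 τ, (c ^ 2 * P i / (m : ℝ)) * V (k - i)) →
        ∀ k, V k ≤ ρP ^ k * V 0 :=
  stmt_11_general c hc m τ hm P hP hPsum hP0 ρc ρa hρc hρa φ hφ αP hαP ρP hρP
end

section
/- Let τ̄ ∈ ℕ, let (V(k))_{k∈ℕ} and (W(k))_{k∈ℕ} be nonnegative real sequences, and let τ : ℕ → ℕ satisfy τ(k) ≤ min(k, τ̄) for all k. Suppose V(k+1) ≤ max{V(ℓ) : max(k−τ̄,0) ≤ ℓ ≤ k} − W(k−τ(k)) for every k ∈ ℕ. Then for every k ∈ ℕ with ⌊k/(τ̄+1)⌋ ≥ 2, one has min{W(ℓ) : 0 ≤ ℓ ≤ k} ≤ V(0)/(⌊k/(τ̄+1)⌋ − 1); in particular min_{ℓ≤k} W(ℓ) = O(1/k). -/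
/-- The deterministic backbone of Theorem 1 of the paper: under the delayed
descent recursion `V(k+1) ≤ max_{max(k−τ̄,0) ≤ ℓ ≤ k} V(ℓ) − W(k−τ(k))`,
one has `min_{ℓ ≤ k} W(ℓ) ≤ V(0)/(⌊k/(τ̄+1)⌋ − 1)`, i.e. `min_{ℓ≤k} W(ℓ) = O(1/k)`. -/
theorem stmt_12 (τbar : ℕ) (V W : ℕ → ℝ) (hV : ∀ k, 0 ≤ V k) (hW : ∀ k, 0 ≤ W k)
    (τ : ℕ → ℕ) (hτ : ∀ k, τ k ≤ min k τbar)
    (hrec : ∀ k, V (k + 1) ≤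
      (Finset.Icc (k - τbar) k).sup' ⟨k, Finset.mem_Icc.mpr ⟨Nat.sub_le _ _, le_rfl⟩⟩ V
        - W (k - τ k)) :
    ∀ k, 2 ≤ k / (τbar + 1) →
      (Finset.range (k + 1)).inf' ⟨0, Finset.mem_range.mpr (Nat.succ_pos k)⟩ W
        ≤ V 0 / ((k / (τbar + 1) : ℕ) - 1 : ℝ) := by
  intro k hk
  have hne : ∀ j : ℕ, (Finset.Icc (j - τbar) j).Nonempty :=
    fun j => ⟨j, Finset.mem_Icc.mpr ⟨Nat.sub_le _ _, le_rfl⟩⟩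
  set M : ℕ → ℝ := fun j => (Finset.Icc (j - τbar) j).sup' (hne j) V with hMdef
  have hrec' : ∀ j, V (j + 1) ≤ M j - W (j - τ j) := hrec
  have hMV : ∀ j, V j ≤ M j :=
    fun j => Finset.le_sup' V (Finset.mem_Icc.mpr ⟨Nat.sub_le _ _, le_rfl⟩)
  have hMnn : ∀ j, 0 ≤ M j := fun j => le_trans (hV j) (hMV j)
  have hmono : ∀ j, M (j + 1) ≤ M j := by
    intro j
    apply Finset.sup'_le
    intro ℓ hℓ
    rw [Finset.mem_Icc] at hℓ
    rcases eq_or_lt_of_le hℓ.2 with h | h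
    · rw [h]
      have := hrec' j
      have := hW (j - τ j)
      linarith
    · have h1 : ℓ ≤ j := Nat.lt_succ_iff.mp h
      exact Finset.le_sup' V (Finset.mem_Icc.mpr ⟨by omega, h1⟩)
  have hanti : Antitone M := antitone_nat_of_succ_le hmono
  set m : ℝ := (Finset.range (k + 1)).inf' ⟨0, Finset.mem_range.mpr (Nat.succ_pos k)⟩ W
    with hmdef
  have hmnn : 0 ≤ m := Finset.le_inf' _ _ (fun b _ => hW b)
  have hmW : ∀ i, i ≤ k → m ≤ W i :=
    fun i hi => Finset.inf'_le W (Finset.mem_range.mpr (by omega))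
  have hM0 : M 0 = V 0 := by
    apply le_antisymm _ (hMV 0)
    apply Finset.sup'_le
    intro ℓ hℓ
    rw [Finset.mem_Icc] at hℓ
    have : ℓ = 0 := by omega
    rw [this]
  have hstep : ∀ j, j + τbar ≤ k → M (j + τbar + 1) ≤ M j - m := by
    intro j hj
    apply Finset.sup'_le
    intro ℓ hℓ
    rw [Finset.mem_Icc] at hℓ
    have hℓ1 : j + 1 ≤ ℓ := by omega
    obtain ⟨i, rfl⟩ : ∃ i, ℓ = i + 1 := ⟨ℓ - 1, by omega⟩
    have hij : j ≤ i := by omega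
    have h1 : M i ≤ M j := hanti hij
    have h2 : m ≤ W (i - τ i) := hmW _ (by omega)
    have := hrec' i
    linarith
  have hblock : ∀ t, t * (τbar + 1) ≤ k + 1 → M (t * (τbar + 1)) ≤ V 0 - t * m := by
    intro t
    induction t with
    | zero => simp [hM0]
    | succ t ih =>
      intro ht
      have h1 : t * (τbar + 1) + τbar ≤ k := by
        have : (t + 1) * (τbar + 1) = t * (τbar + 1) + τbar + 1 := by ring
        omega
      have h2 := hstep (t * (τbar + 1)) h1
      have h3 := ih (by omega)
      have h4 : (t + 1) * (τbar + 1) = t * (τbar + 1) + τbar + 1 := by ring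
      rw [h4]
      push_cast
      linarith
  set q : ℕ := k / (τbar + 1) with hq
  have hqk : q * (τbar + 1) ≤ k := Nat.div_mul_le_self k (τbar + 1)
  have h5 := hblock q (by omega)
  have h6 := hMnn (q * (τbar + 1))
  have hqm : (q : ℝ) * m ≤ V 0 := by linarith
  have hq2 : (2 : ℝ) ≤ (q : ℝ) := by exact_mod_cast hk
  rw [le_div_iff₀ (by linarith)]
  nlinarith
end

section
/- Let (V(k))_{k∈ℕ} and (W(k))_{k∈ℕ} be nonnegative real sequences and let τ : ℕ → ℕ satisfy τ(k) ≤ k for all k and lim_{k→∞} (k − τ(k)) = +∞. Suppose V(k+1) ≤ max{V(ℓ) : k−τ(k) ≤ ℓ ≤ k} − W(k−τ(k)) for every k ∈ ℕ. Then inf_{k∈ℕ} W(k) = 0. -/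
/-- The deterministic backbone of Theorem 3 of the paper: under total asynchrony
(`k − τ(k) → ∞`) and the delayed descent recursion
`V(k+1) ≤ max_{k−τ(k) ≤ ℓ ≤ k} V(ℓ) − W(k−τ(k))`, one has `inf_k W(k) = 0`. -/
theorem stmt_13 (V W : ℕ → ℝ) (hV : ∀ k, 0 ≤ V k) (hW : ∀ k, 0 ≤ W k)
    (τ : ℕ → ℕ) (hτ : ∀ k, τ k ≤ k)
    (hτtop : Filter.Tendsto (fun k => k - τ k) Filter.atTop Filter.atTop)
    (hrec : ∀ k, V (k + 1) ≤
      (Finset.Icc (k - τ k) k).sup' ⟨k, Finset.mem_Icc.mpr ⟨Nat.sub_le _ _, le_rfl⟩⟩ V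
        - W (k - τ k)) :
    ⨅ k, W k = 0 := by
  have hbdd : BddBelow (Set.range W) := ⟨0, by rintro x ⟨k, rfl⟩; exact hW k⟩
  have h0 : 0 ≤ ⨅ k, W k := le_ciInf hW
  by_contra h
  have hε : 0 < ⨅ k, W k := lt_of_le_of_ne h0 (Ne.symm h)
  set ε := ⨅ k, W k with hεdef
  have hWε : ∀ k, ε ≤ W k := fun k => ciInf_le hbdd k
  -- base: V k ≤ V 0 for all k
  have hbase : ∀ k, V k ≤ V 0 := by
    intro k
    induction k using Nat.strong_induction_on with
    | _ k ih =>
      match k with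
      | 0 => exact le_rfl
      | (m + 1) =>
        refine le_trans (hrec m) ?_
        have hsup : (Finset.Icc (m - τ m) m).sup'
            ⟨m, Finset.mem_Icc.mpr ⟨Nat.sub_le _ _, le_rfl⟩⟩ V ≤ V 0 := by
          apply Finset.sup'_le
          intro ℓ hℓ
          have hℓm : ℓ ≤ m := (Finset.mem_Icc.mp hℓ).2
          exact ih ℓ (Nat.lt_succ_of_le hℓm)
        linarith [hW (m - τ m)]
  -- main induction: ∀ j, ∃ N, ∀ k ≥ N, V k ≤ V 0 - j * ε
  have hmain : ∀ j : ℕ, ∃ N, ∀ k ≥ N, V k ≤ V 0 - j * ε := by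
    intro j
    induction j with
    | zero => exact ⟨0, fun k _ => by simpa using hbase k⟩
    | succ j ih =>
      obtain ⟨N, hN⟩ := ih
      obtain ⟨M, hM⟩ := (Filter.tendsto_atTop.mp hτtop N).exists_forall_of_atTop
      refine ⟨M + 1, fun k hk => ?_⟩
      obtain ⟨m, rfl⟩ := Nat.exists_eq_add_of_le hk
      have hm : M + m ≥ M := Nat.le_add_right _ _
      have hwin : N ≤ (M + m) - τ (M + m) := hM _ hm
      have hsup : (Finset.Icc ((M + m) - τ (M + m)) (M + m)).sup'
          ⟨M + m, Finset.mem_Icc.mpr ⟨Nat.sub_le _ _, le_rfl⟩⟩ V ≤ V 0 - j * ε := by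
        apply Finset.sup'_le
        intro ℓ hℓ
        exact hN ℓ (le_trans hwin (Finset.mem_Icc.mp hℓ).1)
      have := hrec (M + m)
      have hw := hWε ((M + m) - τ (M + m))
      have : V (M + m + 1) ≤ V 0 - j * ε - ε := by linarith
      have heq : M + 1 + m = M + m + 1 := by ring
      rw [heq]
      push_cast
      linarith
  -- choose j large
  obtain ⟨j, hj⟩ := exists_nat_gt (V 0 / ε)
  obtain ⟨N, hN⟩ := hmain j
  have hVN := hN N le_rfl
  have : V 0 < j * ε := (div_lt_iff₀ hε).mp hj
  linarith [hV N]
end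

section
/- Let β ∈ (0,1) and let a, γ be reals with a ≥ 1 and γ ≥ 1. Let (I(t))_{t∈ℕ} be a sequence of nonnegative reals with I(0) = 0 such that I(t+1) ≤ I(t) + a·(I(t) + γ)^β for every t ∈ ℕ. Then I(t) ≤ (a·(t + γ))^{1/(1−β)} − γ for every t ∈ ℕ. -/
/-! With `c = 1/(1-β)` one has `c·β = c - 1`, so the claim is `I t + γ ≤ u_t ^ c` for
`u_t = a(t + γ)`. This is preserved by the recursion because `u_{t+1} = u_t + a` and
`u ^ c + a·u ^ (c-1) ≤ (u + a) ^ c` for `c ≥ 1`, the increment of `x ↦ x ^ c` being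
at least its slope at the left endpoint. -/

namespace Real

theorem rpow_add_mul_rpow_sub_one_le {u a c : ℝ} (hu : 0 ≤ u) (ha : 0 ≤ a) (hc : 1 ≤ c) :
    u ^ c + a * u ^ (c - 1) ≤ (u + a) ^ c := by
  have hsplit : ∀ x : ℝ, 0 ≤ x → x ^ c = x * x ^ (c - 1) := fun x hx => by
    conv_lhs => rw [← add_sub_cancel 1 c]
    rw [rpow_add' hx (by linarith), rpow_one]
  have hmono : u ^ (c - 1) ≤ (u + a) ^ (c - 1) :=
    rpow_le_rpow hu (by linarith) (by linarith)
  rw [hsplit u hu, hsplit (u + a) (by linarith)]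
  nlinarith [rpow_nonneg hu (c - 1)]

theorem add_mul_rpow_le_rpow_one_div_one_sub {β a x u : ℝ} (hβ0 : 0 ≤ β) (hβ1 : β < 1)
    (ha : 0 ≤ a) (hx : 0 ≤ x) (hu : 0 ≤ u) (hxu : x ≤ u ^ (1 / (1 - β))) :
    x + a * x ^ β ≤ (u + a) ^ (1 / (1 - β)) := by
  have hcβ : 1 / (1 - β) * β = 1 / (1 - β) - 1 := by
    field_simp [show 1 - β ≠ 0 by linarith]; ring
  set c := 1 / (1 - β)
  have hc : 1 ≤ c := by rw [le_div_iff₀ (by linarith)]; linarith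
  have hpow : x ^ β ≤ u ^ (c - 1) := by
    calc x ^ β ≤ (u ^ c) ^ β := rpow_le_rpow hx hxu hβ0
      _ = u ^ (c - 1) := by rw [← rpow_mul hu, hcβ]
  calc x + a * x ^ β ≤ u ^ c + a * u ^ (c - 1) := by gcongr
    _ ≤ (u + a) ^ c := rpow_add_mul_rpow_sub_one_le hu ha hc

end Real

/-- The induction bound (eq. `Itupperbound`) in the proof of Theorem 4 of the
paper: if `I(0) = 0` and `I(t+1) ≤ I(t) + a·(I(t) + γ)^β`, then
`I(t) ≤ (a·(t + γ))^(1/(1−β)) − γ`. -/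
theorem stmt_17 (β a γ : ℝ) (hβ : β ∈ Set.Ioo (0:ℝ) 1) (ha : 1 ≤ a) (hγ : 1 ≤ γ)
    (I : ℕ → ℝ) (hInonneg : ∀ t, 0 ≤ I t) (hI0 : I 0 = 0)
    (hrec : ∀ t, I (t + 1) ≤ I t + a * (I t + γ) ^ β) :
    ∀ t, I t ≤ (a * ((t : ℝ) + γ)) ^ ((1 : ℝ) / (1 - β)) - γ := by
  obtain ⟨hβ0, hβ1⟩ := hβ
  have hc : 1 ≤ 1 / (1 - β) := by rw [le_div_iff₀ (by linarith)]; linarith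
  suffices h : ∀ t : ℕ, I t + γ ≤ (a * ((t : ℝ) + γ)) ^ (1 / (1 - β)) from
    fun t => le_sub_iff_add_le.mpr (h t)
  intro t
  induction t with
  | zero =>
    rw [hI0, zero_add, Nat.cast_zero, zero_add]
    calc γ ≤ a * γ := le_mul_of_one_le_left (by linarith) ha
      _ ≤ (a * γ) ^ (1 / (1 - β)) := Real.self_le_rpow_of_one_le (by nlinarith) hc
  | succ t ih =>
    have hu : 0 ≤ a * ((t : ℝ) + γ) := by positivity
    calc I (t + 1) + γ ≤ (I t + γ) + a * (I t + γ) ^ β := by linarith [hrec t]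
      _ ≤ (a * ((t : ℝ) + γ) + a) ^ (1 / (1 - β)) :=
        Real.add_mul_rpow_le_rpow_one_div_one_sub hβ0.le hβ1 (by linarith)
          (by linarith [hInonneg t]) hu ih
      _ = (a * (((t + 1 : ℕ) : ℝ) + γ)) ^ (1 / (1 - β)) := by push_cast; ring_nf
end
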